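/- arXiv:2105.14267 — 3 statements merged into one kernel-verified Lean document; each statement's English description precedes it below -/
import Mathlib

section
/- Let A be a finite set and let Δ, I : A → ℝ satisfy Δ(a) ≥ 0 and I(a) > 0 for every a ∈ A. Suppose π* belongs to the probability simplex D(A) and minimizes the information ratio π ↦ (Σ_a π(a)Δ(a))² / (Σ_a π(a)I(a)) over D(A). Then for every q ∈ D(A), 2·Σ_a q(a)Δ(a) ≥ (Σ_a π*(a)Δ(a)) · (1 + (Σ_a q(a)I(a))/(Σ_a π*(a)I(a))); in particular 2·Σ_a q(a)Δ(a) ≥ Σ_a π*(a)Δ(a). -/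
/-!
Restrict the information ratio to the segment `(1 - t) π* + t q`, `t ∈ [0, 1]`: numerator and
denominator are affine in `t`, and since `t = 0` is a minimum, the right derivative there is
nonnegative. Clearing denominators and letting `t → 0⁺` gives
`Δ*² (I_q - I*) ≤ 2 I* Δ* (Δ_q - Δ*)`, and dividing by `Δ* I*` (when `Δ* > 0`) is the claim.
-/

open Finset Filter Topology

lemma le_of_forall_le_add_mul {a b c : ℝ} (h : ∀ t : ℝ, 0 < t → t ≤ 1 → a ≤ b + t * c) :
    a ≤ b := by
  have hlim : Tendsto (fun t : ℝ => b + t * c) (𝓝[>] 0) (𝓝 b) := by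
    have : Continuous fun t : ℝ => b + t * c := by fun_prop
    exact (this.tendsto' 0 b (by simp)).mono_left nhdsWithin_le_nhds
  refine ge_of_tendsto hlim ?_
  filter_upwards [Ioc_mem_nhdsGT zero_lt_one] with t ht using h t ht.1 ht.2

lemma sum_mul_pos_of_mem_stdSimplex {A : Type*} [Fintype A] {π f : A → ℝ}
    (hπ : π ∈ stdSimplex ℝ A) (hf : ∀ a, 0 < f a) : 0 < ∑ a, π a * f a := by
  obtain ⟨a, -, ha⟩ := exists_ne_zero_of_sum_ne_zero (hπ.2.symm ▸ one_ne_zero : ∑ a, π a ≠ 0)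
  exact sum_pos' (fun b _ => mul_nonneg (hπ.1 b) (hf b).le)
    ⟨a, mem_univ a, mul_pos (lt_of_le_of_ne (hπ.1 a) (Ne.symm ha)) (hf a)⟩

lemma sum_smul_add_smul_mul {A : Type*} [Fintype A] (s t : ℝ) (p q f : A → ℝ) :
    ∑ a, (s • p + t • q) a * f a = s * ∑ a, p a * f a + t * ∑ a, q a * f a := by
  simp only [Pi.add_apply, Pi.smul_apply, smul_eq_mul, add_mul, sum_add_distrib, mul_sum, mul_assoc]

lemma mul_one_add_div_le_of_forall_sq_div_le {d₀ d₁ i₀ i₁ : ℝ} (hd₀ : 0 ≤ d₀) (hd₁ : 0 ≤ d₁)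
    (hi₀ : 0 < i₀) (hi₁ : 0 < i₁)
    (h : ∀ t : ℝ, 0 < t → t ≤ 1 →
      d₀ ^ 2 / i₀ ≤ ((1 - t) * d₀ + t * d₁) ^ 2 / ((1 - t) * i₀ + t * i₁)) :
    d₀ * (1 + i₁ / i₀) ≤ 2 * d₁ := by
  have hderiv : d₀ ^ 2 * (i₁ - i₀) ≤ 2 * i₀ * d₀ * (d₁ - d₀) := by
    refine le_of_forall_le_add_mul (c := i₀ * (d₁ - d₀) ^ 2) fun t ht₀ ht₁ => ?_
    have hit : 0 < (1 - t) * i₀ + t * i₁ := by nlinarith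
    have ht := h t ht₀ ht₁
    rw [div_le_div_iff₀ hi₀ hit] at ht
    refine le_of_mul_le_mul_left ?_ ht₀
    linear_combination ht
  have hmain : d₀ * (i₀ + i₁) ≤ 2 * i₀ * d₁ := by
    rcases hd₀.eq_or_lt with rfl | hpos
    · rw [zero_mul]; positivity
    · exact le_of_mul_le_mul_left (by linear_combination hderiv) hpos
  calc d₀ * (1 + i₁ / i₀) = d₀ * (i₀ + i₁) / i₀ := by field_simp
    _ ≤ 2 * d₁ := by rw [div_le_iff₀ hi₀]; linarith

/-- First-order optimality step for IDS: a minimizer of the squared information ratio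
over the probability simplex satisfies the stated comparison inequality against any
other distribution in the simplex. -/
theorem ids_first_order_optimality
    {A : Type*} [Fintype A]
    (Δ I : A → ℝ)
    (hΔ : ∀ a, 0 ≤ Δ a) (hI : ∀ a, 0 < I a)
    (πstar : A → ℝ)
    (hπstar : (∀ a, 0 ≤ πstar a) ∧ ∑ a, πstar a = 1)
    (hmin : ∀ π : A → ℝ, (∀ a, 0 ≤ π a) → ∑ a, π a = 1 →
      (∑ a, πstar a * Δ a) ^ 2 / (∑ a, πstar a * I a) ≤
        (∑ a, π a * Δ a) ^ 2 / (∑ a, π a * I a)) :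
    ∀ q : A → ℝ, (∀ a, 0 ≤ q a) → ∑ a, q a = 1 →
      (2 * ∑ a, q a * Δ a ≥
        (∑ a, πstar a * Δ a) * (1 + (∑ a, q a * I a) / (∑ a, πstar a * I a))) ∧
      2 * ∑ a, q a * Δ a ≥ ∑ a, πstar a * Δ a := by
  intro q hq0 hq1
  have hq : q ∈ stdSimplex ℝ A := ⟨hq0, hq1⟩
  have hDs : 0 ≤ ∑ a, πstar a * Δ a := sum_nonneg fun a _ => mul_nonneg (hπstar.1 a) (hΔ a)
  have hDq : 0 ≤ ∑ a, q a * Δ a := sum_nonneg fun a _ => mul_nonneg (hq0 a) (hΔ a)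
  have hIs := sum_mul_pos_of_mem_stdSimplex hπstar hI
  have hIq := sum_mul_pos_of_mem_stdSimplex hq hI
  have hfirst := mul_one_add_div_le_of_forall_sq_div_le hDs hDq hIs hIq fun t ht₀ ht₁ => by
    have hmix := convex_stdSimplex ℝ A hπstar hq (sub_nonneg.2 ht₁) ht₀.le (sub_add_cancel 1 t)
    simpa only [sum_smul_add_smul_mul] using hmin _ hmix.1 hmix.2
  exact ⟨hfirst, le_trans (le_mul_of_one_le_right hDs (le_add_of_nonneg_right
    (div_pos hIq hIs).le)) hfirst⟩
end

section
/- Let A be a finite subset of ℝ^d. Let p be a probability distribution on A such that every a ∈ A with p(a) > 0 has at most s nonzero coordinates and satisfies ‖a‖_∞ ≤ 1. Let ν be a probability distribution on A and C > 0 a constant such that Σ_{a∈A} ν(a)·⟨a, w⟩² ≥ C·‖w‖₂² for every w ∈ ℝ^d (i.e., the minimum eigenvalue of Σ_a ν(a)·a·aᵀ is at least C). Let γ ∈ (0, 1] and let π = (1−γ)·p + γ·ν be the mixture distribution on A. Then for any vectors (μ_a)_{a∈A} and v in ℝ^d, Σ_{a*∈A} p(a*)·⟨a*, μ_{a*} −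 v⟩ ≤ s · √( (1/(γ·C)) · Σ_{a∈A} π(a) · Σ_{a*∈A} p(a*)·⟨a, μ_{a*} − v⟩² ). -/
/-!
For `w_{a*} = μ_{a*} − v`, an `s`-sparse action `a*` with entries in `[-1, 1]` satisfies
`⟨a*, w_{a*}⟩ ≤ √s ‖w_{a*}‖ ≤ s ‖w_{a*}‖` by Cauchy–Schwarz, and Jensen's inequality for `√` gives
`∑ p(a*) ‖w_{a*}‖ ≤ √(∑ p(a*) ‖w_{a*}‖²)`. On the other side, the mixture puts weight at least `γ ν`
on every action, and exploration of `ν` gives `∑ₐ ν(a) ⟨a, w⟩² ≥ C ‖w‖²`; hence the double sum is at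
least `γ C ∑ p(a*) ‖w_{a*}‖²`.
-/

open Finset

theorem sum_sq_le_card_of_abs_le_one {ι : Type*} [Fintype ι] {a : ι → ℝ} {T : Finset ι}
    (hsupp : ∀ i ∉ T, a i = 0) (hbd : ∀ i, |a i| ≤ 1) : ∑ i, a i ^ 2 ≤ T.card := by
  rw [← sum_subset (subset_univ T) fun i _ hi => by rw [hsupp i hi, sq, zero_mul]]
  simpa using sum_le_card_nsmul T (fun i => a i ^ 2) 1 fun i _ =>
    (sq_le_one_iff_abs_le_one _).2 (hbd i)

theorem sum_mul_le_mul_sqrt_of_sparse {ι : Type*} [Fintype ι] {a : ι → ℝ} {T : Finset ι}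
    {s : ℕ} (hT : T.card ≤ s) (hsupp : ∀ i ∉ T, a i = 0) (hbd : ∀ i, |a i| ≤ 1) (w : ι → ℝ) :
    ∑ i, a i * w i ≤ s * √(∑ i, w i ^ 2) := by
  -- Cauchy–Schwarz gives the factor `√s`, and `√s ≤ s` because `s` is a natural number.
  have hcard : ((T.card : ℕ) : ℝ) ≤ (s : ℝ) ^ 2 := by
    exact_mod_cast hT.trans (Nat.le_self_pow two_ne_zero s)
  have hsq : (∑ i, a i * w i) ^ 2 ≤ (s * √(∑ i, w i ^ 2)) ^ 2 := calc
    (∑ i, a i * w i) ^ 2 ≤ (∑ i, a i ^ 2) * ∑ i, w i ^ 2 := sum_mul_sq_le_sq_mul_sq _ _ _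
    _ ≤ (s : ℝ) ^ 2 * ∑ i, w i ^ 2 := by
      gcongr
      exact (sum_sq_le_card_of_abs_le_one hsupp hbd).trans hcard
    _ = (s * √(∑ i, w i ^ 2)) ^ 2 := by rw [mul_pow, Real.sq_sqrt (by positivity)]
  exact (abs_le_of_sq_le_sq' hsq (by positivity)).2

theorem sum_mul_sum_mul_le_of_sparse {ι : Type*} [Fintype ι] {A : Finset (ι → ℝ)}
    {p : (ι → ℝ) → ℝ} {s : ℕ} (hp0 : ∀ a ∈ A, 0 ≤ p a)
    (hsparse : ∀ a ∈ A, 0 < p a →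
      (∃ T : Finset ι, T.card ≤ s ∧ ∀ i ∉ T, a i = 0) ∧ (∀ j, |a j| ≤ 1))
    (w : (ι → ℝ) → ι → ℝ) :
    ∑ a ∈ A, p a * ∑ i, a i * w a i ≤ s * ∑ a ∈ A, p a * √(∑ i, w a i ^ 2) := by
  rw [mul_sum]
  refine sum_le_sum fun a ha => ?_
  rcases (hp0 a ha).eq_or_lt with hpa | hpa
  · simp [← hpa]
  obtain ⟨⟨T, hT, hsupp⟩, hbd⟩ := hsparse a ha hpa
  calc p a * ∑ i, a i * w a i ≤ p a * (s * √(∑ i, w a i ^ 2)) := by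
        gcongr; exact sum_mul_le_mul_sqrt_of_sparse hT hsupp hbd _
    _ = s * (p a * √(∑ i, w a i ^ 2)) := mul_left_comm _ _ _

theorem sum_mul_sqrt_le_sqrt_sum_mul {α : Type*} {A : Finset α} {p f : α → ℝ}
    (hp0 : ∀ a ∈ A, 0 ≤ p a) (hp1 : ∑ a ∈ A, p a = 1) (hf : ∀ a ∈ A, 0 ≤ f a) :
    ∑ a ∈ A, p a * √(f a) ≤ √(∑ a ∈ A, p a * f a) := by
  simpa using Real.strictConcaveOn_sqrt.concaveOn.le_map_sum hp0 hp1 hf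

theorem mul_sum_sq_le_of_exploratory {ι β : Type*} [Fintype ι] {A : Finset (ι → ℝ)}
    {ν : (ι → ℝ) → ℝ} {C : ℝ}
    (hexp : ∀ w : ι → ℝ, C * ∑ i, w i ^ 2 ≤ ∑ a ∈ A, ν a * (∑ i, a i * w i) ^ 2)
    {B : Finset β} {p : β → ℝ} (hp0 : ∀ b ∈ B, 0 ≤ p b) (w : β → ι → ℝ) :
    C * ∑ b ∈ B, p b * ∑ i, w b i ^ 2 ≤
      ∑ a ∈ A, ν a * ∑ b ∈ B, p b * (∑ i, a i * w b i) ^ 2 := calc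
  C * ∑ b ∈ B, p b * ∑ i, w b i ^ 2 = ∑ b ∈ B, p b * (C * ∑ i, w b i ^ 2) := by
      rw [mul_sum]; exact sum_congr rfl fun b _ => mul_left_comm _ _ _
  _ ≤ ∑ b ∈ B, p b * ∑ a ∈ A, ν a * (∑ i, a i * w b i) ^ 2 :=
      sum_le_sum fun b hb => mul_le_mul_of_nonneg_left (hexp (w b)) (hp0 b hb)
  _ = ∑ a ∈ A, ν a * ∑ b ∈ B, p b * (∑ i, a i * w b i) ^ 2 := by
      simp_rw [mul_sum]
      rw [sum_comm]
      exact sum_congr rfl fun a _ => sum_congr rfl fun b _ => mul_left_comm _ _ _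

theorem mul_sum_le_sum_mixture_mul {α : Type*} {A : Finset α} {p ν X : α → ℝ} {γ : ℝ}
    (hγ1 : γ ≤ 1) (hp0 : ∀ a ∈ A, 0 ≤ p a) (hX : ∀ a ∈ A, 0 ≤ X a) :
    γ * ∑ a ∈ A, ν a * X a ≤ ∑ a ∈ A, ((1 - γ) * p a + γ * ν a) * X a := by
  rw [mul_sum]
  refine sum_le_sum fun a ha => ?_
  linear_combination mul_nonneg (mul_nonneg (sub_nonneg.2 hγ1) (hp0 a ha)) (hX a ha)

theorem mixture_policy_regret_information_bound_general
    {d : ℕ} (A : Finset (Fin d → ℝ)) (s : ℕ)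
    (p : (Fin d → ℝ) → ℝ)
    (hp0 : ∀ a ∈ A, 0 ≤ p a) (hp1 : ∑ a ∈ A, p a = 1)
    (hsparse : ∀ a ∈ A, 0 < p a →
      (∃ T : Finset (Fin d), T.card ≤ s ∧ ∀ i ∉ T, a i = 0) ∧ (∀ j, |a j| ≤ 1))
    (ν : (Fin d → ℝ) → ℝ)
    (C : ℝ) (hC : 0 < C)
    (hexp : ∀ w : Fin d → ℝ,
      ∑ a ∈ A, ν a * (∑ i, a i * w i) ^ 2 ≥ C * ∑ i, (w i) ^ 2)
    (γ : ℝ) (hγ0 : 0 < γ) (hγ1 : γ ≤ 1)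
    (μ : (Fin d → ℝ) → (Fin d → ℝ)) (v : Fin d → ℝ) :
    ∑ astar ∈ A, p astar * (∑ i, astar i * (μ astar i - v i)) ≤
      s * Real.sqrt ((1 / (γ * C)) *
        ∑ a ∈ A, ((1 - γ) * p a + γ * ν a) *
          ∑ astar ∈ A, p astar * (∑ i, a i * (μ astar i - v i)) ^ 2) := by
  set w : (Fin d → ℝ) → Fin d → ℝ := fun b i => μ b i - v i
  have hinfo : γ * C * ∑ b ∈ A, p b * ∑ i, w b i ^ 2 ≤
      ∑ a ∈ A, ((1 - γ) * p a + γ * ν a) * ∑ b ∈ A, p b * (∑ i, a i * w b i) ^ 2 := by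
    rw [mul_assoc]
    refine (mul_le_mul_of_nonneg_left (mul_sum_sq_le_of_exploratory hexp hp0 w) hγ0.le).trans ?_
    exact mul_sum_le_sum_mixture_mul hγ1 hp0 fun a _ =>
      sum_nonneg fun b hb => mul_nonneg (hp0 b hb) (sq_nonneg _)
  calc ∑ b ∈ A, p b * ∑ i, b i * w b i ≤ s * ∑ b ∈ A, p b * √(∑ i, w b i ^ 2) :=
        sum_mul_sum_mul_le_of_sparse hp0 hsparse w
    _ ≤ s * √(∑ b ∈ A, p b * ∑ i, w b i ^ 2) := by
        gcongr
        exact sum_mul_sqrt_le_sqrt_sum_mul hp0 hp1 fun b _ => by positivity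
    _ ≤ _ := by
        gcongr
        rw [one_div_mul_eq_div, le_div_iff₀' (by positivity)]
        exact hinfo

/-- Core deterministic inequality behind `Ψ_{*,3} ≤ s²/(4 C_min(A))` for the mixture
policy `π = (1−γ) p + γ ν`: if every action with positive posterior probability is
`s`-sparse with `‖a‖_∞ ≤ 1`, and `ν` is exploratory with constant `C`, then
`∑_{a*} p(a*) ⟨a*, μ_{a*} − v⟩ ≤ s √((1/(γC)) ∑ₐ π(a) ∑_{a*} p(a*) ⟨a, μ_{a*} − v⟩²)`. -/
theorem mixture_policy_regret_information_bound
    {d : ℕ} (A : Finset (Fin d → ℝ)) (s : ℕ)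
    (p : (Fin d → ℝ) → ℝ)
    (hp0 : ∀ a ∈ A, 0 ≤ p a) (hp1 : ∑ a ∈ A, p a = 1)
    (hsparse : ∀ a ∈ A, 0 < p a →
      (∃ T : Finset (Fin d), T.card ≤ s ∧ ∀ i ∉ T, a i = 0) ∧ (∀ j, |a j| ≤ 1))
    (ν : (Fin d → ℝ) → ℝ)
    (hν0 : ∀ a ∈ A, 0 ≤ ν a) (hν1 : ∑ a ∈ A, ν a = 1)
    (C : ℝ) (hC : 0 < C)
    (hexp : ∀ w : Fin d → ℝ,
      ∑ a ∈ A, ν a * (∑ i, a i * w i) ^ 2 ≥ C * ∑ i, (w i) ^ 2)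
    (γ : ℝ) (hγ0 : 0 < γ) (hγ1 : γ ≤ 1)
    (μ : (Fin d → ℝ) → (Fin d → ℝ)) (v : Fin d → ℝ) :
    ∑ astar ∈ A, p astar * (∑ i, astar i * (μ astar i - v i)) ≤
      s * Real.sqrt ((1 / (γ * C)) *
        ∑ a ∈ A, ((1 - γ) * p a + γ * ν a) *
          ∑ astar ∈ A, p astar * (∑ i, a i * (μ astar i - v i)) ^ 2) :=
  mixture_policy_regret_information_bound_general A s p hp0 hp1 hsparse ν C hC hexp γ hγ0 hγ1 μ v
end

section
/- Let A be a finite subset of ℝ^d, let p be a probability distribution on A, and let (μ_a)_{a∈A} and v be vectors in ℝ^d. Then ( Σ_{a∈A} p(a)·⟨a, μ_a − v⟩ )² ≤ d · Σ_{a∈A} Σ_{a'∈A} p(a)·p(a')·⟨a, μ_{a'} − v⟩². -/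
/-!
The matrix `M a a' = ⟨√p(a) a, √p(a') (μ_{a'} - v)⟩` factors through `ℝ^d`, so its rank `r` is
at most `d`, and its trace is the sum on the left. Computing the trace in an orthonormal basis
`b₁, …, b_r` of the column space of `M` gives `tr M = ∑ₖ ⟨bₖ, M bₖ⟩`; Cauchy–Schwarz (twice) and
Bessel's inequality for the rows of `M` then give `(tr M)² ≤ r ∑ₖ ‖M bₖ‖² ≤ r ‖M‖_F²`.
-/

open Finset Matrix Module

namespace LinearMap

variable {𝕜 E ι : Type*} [RCLike 𝕜] [NormedAddCommGroup E] [InnerProductSpace 𝕜 E]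
  [FiniteDimensional 𝕜 E] [Fintype ι]

theorem trace_eq_sum_inner_of_forall_mem (T : E →ₗ[𝕜] E) (p : Submodule 𝕜 E)
    (hT : ∀ x, T x ∈ p) (b : OrthonormalBasis ι 𝕜 p) :
    trace 𝕜 E T = ∑ i, inner 𝕜 (b i : E) (T (b i)) := by
  rw [← T.trace_restrict_eq_of_forall_mem p hT, trace_eq_sum_inner _ b]
  rfl

end LinearMap

namespace Matrix

section

variable {m n R : Type*} [Fintype n] [DecidableEq n]

theorem rank_eq_finrank_range_toLpLin [Finite m] [CommRing R] (p q : ENNReal)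
    (M : Matrix m n R) : M.rank = finrank R (LinearMap.range (toLpLin p q M)) := by
  rw [toLpLin_eq_toLin]
  exact rank_eq_finrank_range_toLin ..

theorem trace_toLpLin [CommRing R] (p : ENNReal) (M : Matrix n n R) :
    LinearMap.trace R _ (toLpLin p p M) = M.trace := by
  rw [toLpLin_eq_toLin, LinearMap.trace_eq_matrix_trace R (PiLp.basisFun p R n),
    LinearMap.toMatrix_toLin]

theorem sum_norm_sq_toEuclideanLin_le [Fintype m] {ι : Type*} (s : Finset ι)
    {b : ι → EuclideanSpace ℝ n} (hb : Orthonormal ℝ b) (M : Matrix m n ℝ) :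
    ∑ k ∈ s, ‖toEuclideanLin M (b k)‖ ^ 2 ≤ ∑ i, ∑ j, M i j ^ 2 := by
  have hrow : ∀ k i, (M *ᵥ (b k).ofLp) i = inner ℝ (b k) (WithLp.toLp 2 (M i)) := by
    intro k i
    simp [EuclideanSpace.inner_eq_star_dotProduct, mulVec]
  calc ∑ k ∈ s, ‖toEuclideanLin M (b k)‖ ^ 2
      = ∑ i, ∑ k ∈ s, ‖inner ℝ (b k) (WithLp.toLp 2 (M i))‖ ^ 2 := by
        simp only [EuclideanSpace.real_norm_sq_eq, toLpLin_apply, hrow, Real.norm_eq_abs, sq_abs]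
        exact sum_comm
    _ ≤ ∑ i, ‖WithLp.toLp 2 (M i)‖ ^ 2 := sum_le_sum fun i _ => hb.sum_inner_products_le _
    _ = ∑ i, ∑ j, M i j ^ 2 := by simp only [EuclideanSpace.real_norm_sq_eq]

end

variable {n : Type*} [Fintype n]

theorem sq_trace_le_rank_mul_sum_sq (M : Matrix n n ℝ) :
    M.trace ^ 2 ≤ M.rank * ∑ i, ∑ j, M i j ^ 2 := by
  classical
  set T := toEuclideanLin M
  let b := stdOrthonormalBasis ℝ (LinearMap.range T)
  have htrace : M.trace = ∑ k, inner ℝ (b k : EuclideanSpace ℝ n) (T (b k)) := by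
    rw [← trace_toLpLin, T.trace_eq_sum_inner_of_forall_mem _ (LinearMap.mem_range_self T) b]
  have hdiag : ∀ k, inner ℝ (b k : EuclideanSpace ℝ n) (T (b k)) ^ 2 ≤ ‖T (b k)‖ ^ 2 := by
    intro k
    have hcs := abs_real_inner_le_norm (b k : EuclideanSpace ℝ n) (T (b k))
    have hb : ‖(b k : EuclideanSpace ℝ n)‖ = 1 := b.norm_eq_one k
    rw [hb, one_mul] at hcs
    simpa only [sq_abs] using pow_le_pow_left₀ (abs_nonneg _) hcs 2
  calc M.trace ^ 2
      ≤ finrank ℝ (LinearMap.range T) * ∑ k, inner ℝ (b k : EuclideanSpace ℝ n) (T (b k)) ^ 2 := by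
        simpa [htrace] using sq_sum_le_card_mul_sum_sq (s := univ)
          (f := fun k => inner ℝ (b k : EuclideanSpace ℝ n) (T (b k)))
    _ ≤ M.rank * ∑ k, ‖T (b k)‖ ^ 2 := by
        rw [rank_eq_finrank_range_toLpLin]
        exact mul_le_mul_of_nonneg_left (sum_le_sum fun k _ => hdiag k) (Nat.cast_nonneg _)
    _ ≤ M.rank * ∑ i, ∑ j, M i j ^ 2 := by
        gcongr
        exact sum_norm_sq_toEuclideanLin_le _
          (b.orthonormal.comp_linearIsometry (Submodule.subtypeₗᵢ _)) M

theorem sq_sum_dotProduct_le_card_mul {ι : Type*} [Fintype ι] (x y : ι → n → ℝ) :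
    (∑ a, x a ⬝ᵥ y a) ^ 2 ≤ Fintype.card n * ∑ a, ∑ b, (x a ⬝ᵥ y b) ^ 2 := by
  let M : Matrix ι ι ℝ := of x * (of y)ᵀ
  have hM : ∀ a b, M a b = x a ⬝ᵥ y b := fun a b => mul_apply'
  have hrank : M.rank ≤ Fintype.card n :=
    (rank_mul_le_left (of x) (of y)ᵀ).trans (rank_le_card_width (of x))
  calc (∑ a, x a ⬝ᵥ y a) ^ 2 = M.trace ^ 2 := by simp only [trace, diag, hM]
    _ ≤ M.rank * ∑ a, ∑ b, M a b ^ 2 := sq_trace_le_rank_mul_sum_sq M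
    _ ≤ Fintype.card n * ∑ a, ∑ b, (x a ⬝ᵥ y b) ^ 2 := by
        simp only [hM]
        gcongr

end Matrix

theorem trace_rank_information_ratio_bound_general
    {d : ℕ} (A : Finset (Fin d → ℝ))
    (p : (Fin d → ℝ) → ℝ)
    (hp0 : ∀ a ∈ A, 0 ≤ p a)
    (μ : (Fin d → ℝ) → (Fin d → ℝ)) (v : Fin d → ℝ) :
    (∑ a ∈ A, p a * (∑ i, a i * (μ a i - v i))) ^ 2 ≤
      d * ∑ a ∈ A, ∑ a' ∈ A, p a * p a' * (∑ i, a i * (μ a' i - v i)) ^ 2 := by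
  have key := sq_sum_dotProduct_le_card_mul (fun a : A => √(p a) • (a : Fin d → ℝ))
    (fun a : A => √(p a) • (μ a - v))
  have hsqrt : ∀ a : A, √(p a) ^ 2 = p a := fun a => Real.sq_sqrt (hp0 a a.2)
  simp only [dotProduct_smul, smul_dotProduct, smul_eq_mul, ← mul_assoc, ← sq, hsqrt, mul_pow,
    Fintype.card_fin] at key
  simp only [← Finset.sum_coe_sort A]
  simpa only [dotProduct, Pi.sub_apply, mul_comm (p _) (p _)] using key

/-- Linear-algebraic heart of the bound `Ψ_{*,2} ≤ d/2`: for a probability distribution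
`p` on a finite set of actions `A ⊆ ℝ^d`,
`(∑ₐ p(a) ⟨a, μ_a − v⟩)² ≤ d ∑ₐ ∑_{a'} p(a) p(a') ⟨a, μ_{a'} − v⟩²`. -/
theorem trace_rank_information_ratio_bound
    {d : ℕ} (A : Finset (Fin d → ℝ))
    (p : (Fin d → ℝ) → ℝ)
    (hp0 : ∀ a ∈ A, 0 ≤ p a) (hp1 : ∑ a ∈ A, p a = 1)
    (μ : (Fin d → ℝ) → (Fin d → ℝ)) (v : Fin d → ℝ) :
    (∑ a ∈ A, p a * (∑ i, a i * (μ a i - v i))) ^ 2 ≤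
      d * ∑ a ∈ A, ∑ a' ∈ A, p a * p a' * (∑ i, a i * (μ a' i - v i)) ^ 2 :=
  trace_rank_information_ratio_bound_general A p hp0 μ v
end
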